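/- Let k be a field of characteristic zero, B = k[X,Y,Z], and D an irreducible homogeneous triangularizable LND of degree d with D = γΔ_{(X,P)}, P = Y^{d+2} + Xf_{d+1}(X,Y) + βX^{d+1}Z, A = ker(D) = k[X,P]. Then B is a free A-module with D-basis {Y^i Z^j : 0 ≤ i ≤ d+1, j ≥ 0}, i.e., this set is an A-basis of B whose elements have pairwise distinct deg_D-values. -/

import Mathlib

set_option maxHeartbeats 1600000
set_option synthInstance.maxHeartbeats 1000000


/-- A derivation is locally nilpotent if every element is killed by some iterate. -/
def IsLND {k B : Type*} [CommRing k] [CommRing B] [Algebra k B]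
    (D : Derivation k B B) : Prop :=
  ∀ b : B, ∃ n : ℕ, (⇑D)^[n] b = 0

/-- `ndeg D b n` says that `n` is the `D`-degree of `b`, i.e. the largest `m` with
`D^[m] b ≠ 0`. -/
def ndeg {k B : Type*} [CommRing k] [CommRing B] [Algebra k B]
    (D : Derivation k B B) (b : B) (n : ℕ) : Prop :=
  (⇑D)^[n] b ≠ 0 ∧ (⇑D)^[n + 1] b = 0

/-- A derivation is irreducible if the ideal generated by its image is not contained
in any proper principal ideal. -/
def IsIrred {k B : Type*} [CommRing k] [CommRing B] [Algebra k B]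
    (D : Derivation k B B) : Prop :=
  ∀ b : B, Ideal.span (Set.range (⇑D)) ≤ Ideal.span {b} → IsUnit b

open MvPolynomial

/-- The Jacobian derivation `g ↦ ∂(f₁,f₂,g)/∂(X₀,X₁,X₂)` on `k[X₀,X₁,X₂]`. -/
noncomputable def jac {k : Type*} [CommRing k]
    (f₁ f₂ g : MvPolynomial (Fin 3) k) : MvPolynomial (Fin 3) k :=
  Matrix.det (Matrix.of fun i j => MvPolynomial.pderiv j (![f₁, f₂, g] i))

/-- `V 0, V 1, V 2` form a system of coordinates (variables) of `k[X₀,X₁,X₂]`. -/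
def IsCoordSys {k : Type*} [CommRing k]
    (V : Fin 3 → MvPolynomial (Fin 3) k) : Prop :=
  ∃ σ : MvPolynomial (Fin 3) k ≃ₐ[k] MvPolynomial (Fin 3) k,
    ∀ i, σ (X i) = V i

/-- `D` is homogeneous of degree `d` with respect to the standard grading. -/
def IsHomogDer {k : Type*} [CommRing k]
    (D : Derivation k (MvPolynomial (Fin 3) k) (MvPolynomial (Fin 3) k))
    (d : ℕ) : Prop :=
  ∀ (i : ℕ) (f : MvPolynomial (Fin 3) k),
    f.IsHomogeneous i → (D f).IsHomogeneous (i + d)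

/-- `D` has rank 2: some coordinate system has its last variable in the kernel, but no
coordinate system has its last two variables in the kernel. -/
def HasRank2 {k : Type*} [CommRing k]
    (D : Derivation k (MvPolynomial (Fin 3) k) (MvPolynomial (Fin 3) k)) : Prop :=
  (∃ V : Fin 3 → MvPolynomial (Fin 3) k, IsCoordSys V ∧ D (V 2) = 0) ∧
  ¬ (∃ V : Fin 3 → MvPolynomial (Fin 3) k, IsCoordSys V ∧ D (V 1) = 0 ∧ D (V 2) = 0)

/-- `D` is triangularizable: in some coordinate system `{X,Y,Z}` one has `D X ∈ k`,
`D Y ∈ k[X]`, `D Z ∈ k[X,Y]`. -/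
def IsTriangularizable {k : Type*} [CommRing k]
    (D : Derivation k (MvPolynomial (Fin 3) k) (MvPolynomial (Fin 3) k)) : Prop :=
  ∃ V : Fin 3 → MvPolynomial (Fin 3) k, IsCoordSys V ∧
    (∃ c : k, D (V 0) = C c) ∧
    D (V 1) ∈ Algebra.adjoin k ({V 0} : Set (MvPolynomial (Fin 3) k)) ∧
    D (V 2) ∈ Algebra.adjoin k ({V 0, V 1} : Set (MvPolynomial (Fin 3) k))


open Finset

section Generic
variable {k B : Type*} [CommRing k] [CommRing B] [Algebra k B] (D : Derivation k B B)

lemma iterD_zero (n : ℕ) : (⇑D)^[n] (0 : B) = 0 :=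
  Function.iterate_fixed (map_zero D) n

lemma iterD_add (n : ℕ) (a b : B) :
    (⇑D)^[n] (a + b) = (⇑D)^[n] a + (⇑D)^[n] b := by
  induction n with
  | zero => rfl
  | succ n ih => simp [Function.iterate_succ_apply', ih]

lemma iterD_nsmul (n : ℕ) (c : ℕ) (a : B) :
    (⇑D)^[n] (c • a) = c • (⇑D)^[n] a := by
  induction n with
  | zero => rfl
  | succ n ih => rw [Function.iterate_succ_apply', ih, map_nsmul, Function.iterate_succ_apply']

lemma iterD_sum (n : ℕ) {ι : Type*} (s : Finset ι) (f : ι → B) :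
    (⇑D)^[n] (∑ i ∈ s, f i) = ∑ i ∈ s, (⇑D)^[n] (f i) := by
  classical
  induction s using Finset.induction_on with
  | empty => simp [iterD_zero]
  | insert _ _ h ih => simp [Finset.sum_insert h, iterD_add, ih]

lemma iterD_mul_ker (a : B) (ha : D a = 0) (n : ℕ) (b : B) :
    (⇑D)^[n] (a * b) = a * (⇑D)^[n] b := by
  induction n with
  | zero => rfl
  | succ n ih =>
    rw [Function.iterate_succ_apply', ih, Function.iterate_succ_apply',
      Derivation.leibniz, ha, smul_eq_mul, smul_eq_mul, mul_zero, add_zero]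

lemma iterD_eq_zero_of_ge {a : B} {m : ℕ} (h : (⇑D)^[m] a = 0) {n : ℕ} (hn : m ≤ n) :
    (⇑D)^[n] a = 0 := by
  obtain ⟨p, rfl⟩ := Nat.exists_eq_add_of_le hn
  rw [add_comm, Function.iterate_add_apply, h, iterD_zero]

end Generic

section Generic2
variable {k B : Type*} [CommRing k] [CommRing B] [Algebra k B] (D : Derivation k B B)

lemma D_mul' (x y : B) : D (x * y) = D x * y + x * D y := by
  rw [Derivation.leibniz, smul_eq_mul, smul_eq_mul]; ring

lemma iterD_leibniz (n : ℕ) (p q : B) :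
    (⇑D)^[n] (p * q) =
      ∑ i ∈ Finset.range (n + 1), n.choose i • ((⇑D)^[n - i] p * (⇑D)^[i] q) := by
  induction n with
  | zero => simp [Finset.range]
  | succ n IH =>
    calc
      (⇑D)^[n + 1] (p * q) =
          D (∑ i ∈ Finset.range (n + 1),
              n.choose i • ((⇑D)^[n - i] p * (⇑D)^[i] q)) := by
        rw [Function.iterate_succ_apply', IH]
      _ = (∑ i ∈ Finset.range (n + 1),
            n.choose i • ((⇑D)^[n - i + 1] p * (⇑D)^[i] q)) +
          ∑ i ∈ Finset.range (n + 1),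
            n.choose i • ((⇑D)^[n - i] p * (⇑D)^[i + 1] q) := by
        rw [map_sum]
        simp_rw [map_nsmul, D_mul', Function.iterate_succ_apply',
          smul_add, Finset.sum_add_distrib]
      _ = (∑ i ∈ Finset.range (n + 1),
                n.choose (i + 1) • ((⇑D)^[n - i] p * (⇑D)^[i + 1] q)) +
              1 • ((⇑D)^[n + 1] p * (⇑D)^[0] q) +
            ∑ i ∈ Finset.range (n + 1),
              n.choose i • ((⇑D)^[n - i] p * (⇑D)^[i + 1] q) := ?_
      _ = ((∑ i ∈ Finset.range (n + 1),
              n.choose (i + 1) • ((⇑D)^[n - i] p * (⇑D)^[i + 1] q)) +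
              ∑ i ∈ Finset.range (n + 1),
                n.choose i • ((⇑D)^[n - i] p * (⇑D)^[i + 1] q)) +
            1 • ((⇑D)^[n + 1] p * (⇑D)^[0] q) := by
        abel
      _ = (∑ i ∈ Finset.range (n + 1),
              (n + 1).choose (i + 1) • ((⇑D)^[n + 1 - (i + 1)] p * (⇑D)^[i + 1] q)) +
            1 • ((⇑D)^[n + 1] p * (⇑D)^[0] q) := by
        simp_rw [Nat.choose_succ_succ, Nat.succ_sub_succ, add_smul, Finset.sum_add_distrib,
          add_comm]
      _ = ∑ i ∈ Finset.range (n + 1 + 1),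
            (n + 1).choose i • ((⇑D)^[n + 1 - i] p * (⇑D)^[i] q) := by
        rw [Finset.sum_range_succ' _ (n + 1), Nat.choose_zero_right, Nat.sub_zero]
    congr
    refine (Finset.sum_range_succ' _ _).trans (congr_arg₂ (· + ·) ?_ ?_)
    · rw [Finset.sum_range_succ, Nat.choose_succ_self, zero_smul, add_zero]
      refine Finset.sum_congr rfl fun i hi => ?_
      rw [Finset.mem_range] at hi
      have h2 : n - (i + 1) + 1 = n - i := by omega
      rw [h2]
    · rw [Nat.choose_zero_right, Nat.sub_zero]

end Generic2

section NdegAux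
variable {k B : Type*} [CommRing k] [CommRing B] [Algebra k B] (D : Derivation k B B)

/-- local copy of ndeg to keep scratch self-contained; will use real one in final file -/
def ndeg' (b : B) (n : ℕ) : Prop := (⇑D)^[n] b ≠ 0 ∧ (⇑D)^[n + 1] b = 0

lemma ndeg'_unique {b : B} {m n : ℕ} (h1 : ndeg' D b m) (h2 : ndeg' D b n) : m = n := by
  by_contra hne
  rcases Nat.lt_or_ge m n with h | h
  · exact h2.1 (iterD_eq_zero_of_ge D h1.2 h)
  · exact h1.1 (iterD_eq_zero_of_ge D h2.2 (by omega))

variable [IsDomain B] [CharZero B]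

lemma ndeg'_mul {a b : B} {m n : ℕ} (ha : ndeg' D a m) (hb : ndeg' D b n) :
    ndeg' D (a * b) (m + n) := by
  have ha2 : ∀ p, m < p → (⇑D)^[p] a = 0 := fun p hp => iterD_eq_zero_of_ge D ha.2 hp
  have hb2 : ∀ p, n < p → (⇑D)^[p] b = 0 := fun p hp => iterD_eq_zero_of_ge D hb.2 hp
  constructor
  · rw [iterD_leibniz]
    have hsum : ∑ i ∈ Finset.range (m + n + 1),
        (m + n).choose i • ((⇑D)^[m + n - i] a * (⇑D)^[i] b)
        = (m + n).choose n • ((⇑D)^[m] a * (⇑D)^[n] b) := by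
      rw [Finset.sum_eq_single n]
      · rw [Nat.add_sub_cancel]
      · intro i hi hne
        rcases Nat.lt_or_ge i n with h | h
        · rw [ha2 (m + n - i) (by omega), zero_mul, smul_zero]
        · rw [hb2 i (by omega), mul_zero, smul_zero]
      · intro h; exact absurd (Finset.mem_range.mpr (by omega)) h
    rw [hsum, nsmul_eq_mul]
    exact mul_ne_zero (Nat.cast_ne_zero.mpr (Nat.choose_pos (by omega)).ne')
      (mul_ne_zero ha.1 hb.1)
  · rw [iterD_leibniz]
    apply Finset.sum_eq_zero
    intro i hi
    rcases Nat.lt_or_ge n i with h | h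
    · rw [hb2 i h, mul_zero, smul_zero]
    · rw [ha2 (m + n + 1 - i) (by omega), zero_mul, smul_zero]

lemma ndeg'_one : ndeg' D (1 : B) 0 :=
  ⟨one_ne_zero, by simpa using D.map_one_eq_zero⟩

lemma ndeg'_pow {x : B} {n : ℕ} (h : ndeg' D x n) (i : ℕ) : ndeg' D (x ^ i) (i * n) := by
  induction i with
  | zero => simpa using ndeg'_one D
  | succ i ih =>
    have := ndeg'_mul D ih h
    rw [← pow_succ] at this
    have he : i * n + n = (i + 1) * n := by ring
    rwa [he] at this

end NdegAux

section Specific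
variable {k : Type*} [Field k] [CharZero k]

lemma degsum (e : Fin 2 →₀ ℕ) : (∑ i ∈ e.support, e i) = e 0 + e 1 := by
  rw [Finset.sum_subset (Finset.subset_univ _)
    (fun i _ hi => Finsupp.notMem_support_iff.mp hi), Fin.sum_univ_two]

lemma homog_e1 {d : ℕ} {f₀ : MvPolynomial (Fin 2) k} (hf : f₀.IsHomogeneous (d + 1))
    {e : Fin 2 →₀ ℕ} (he : e ∈ f₀.support) : e 1 ≤ d + 1 := by
  have h1 := hf (MvPolynomial.mem_support_iff.mp he)
  replace h1 : Finsupp.degree e = d + 1 := by rw [Finsupp.degree_eq_weight_one]; exact h1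
  have h2 : Finsupp.degree e = e 0 + e 1 := degsum e
  omega

lemma Fexp (f₀ : MvPolynomial (Fin 2) k) :
    (X 0 : MvPolynomial (Fin 3) k) * aeval ![X 0, X 1] f₀
      = ∑ e ∈ f₀.support, C (coeff e f₀) * X 0 ^ (e 0 + 1) * X 1 ^ (e 1) := by
  conv_lhs => rw [f₀.as_sum]
  rw [map_sum, Finset.mul_sum]
  refine Finset.sum_congr rfl fun e he => ?_
  rw [aeval_monomial, Finsupp.prod_pow, Fin.prod_univ_two]
  simp only [Matrix.cons_val_zero, Matrix.cons_val_one, Matrix.head_cons, algebraMap_eq]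
  ring

lemma Dform {γ : k} {D : Derivation k (MvPolynomial (Fin 3) k) (MvPolynomial (Fin 3) k)}
    {P : MvPolynomial (Fin 3) k} (hDdef : ∀ g, D g = C γ * jac (X 0) P g)
    (g : MvPolynomial (Fin 3) k) :
    D g = C γ * (pderiv 1 P * pderiv 2 g - pderiv 2 P * pderiv 1 g) := by
  rw [hDdef, jac, Matrix.det_fin_three]
  simp only [Matrix.of_apply, Matrix.cons_val_zero, Matrix.cons_val_one, Matrix.head_cons,
    Matrix.cons_val_two, Matrix.tail_cons, pderiv_X_self,
    pderiv_X_of_ne (show (0:Fin 3) ≠ 1 by decide), pderiv_X_of_ne (show (0:Fin 3) ≠ 2 by decide)]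
  ring

lemma pderiv2_aeval (q : MvPolynomial (Fin 2) k) :
    pderiv 2 (aeval ![X 0, X 1] q : MvPolynomial (Fin 3) k) = 0 := by
  induction q using MvPolynomial.induction_on with
  | C a => rw [aeval_C]; exact (pderiv 2).map_algebraMap a
  | add p q hp hq => rw [map_add, map_add, hp, hq, add_zero]
  | mul_X p i hp =>
    rw [map_mul, aeval_X, pderiv_mul, hp, zero_mul, zero_add]
    fin_cases i <;>
      simp [pderiv_X_of_ne (show (0:Fin 3) ≠ 2 by decide),
        pderiv_X_of_ne (show (1:Fin 3) ≠ 2 by decide)]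

end Specific



section Specific2
variable {k : Type*} [Field k] [CharZero k]

/-- auxiliary element `D (X 1)` -/
noncomputable def Wel (γ β : k) (d : ℕ) : MvPolynomial (Fin 3) k :=
  -(C γ * (C β * X 0 ^ (d + 1)))

lemma Wel_ne_zero {γ β : k} (hγ : γ ≠ 0) (hβ : β ≠ 0) (d : ℕ) : Wel γ β d ≠ 0 := by
  unfold Wel
  rw [neg_ne_zero]
  exact mul_ne_zero (by simpa using hγ)
    (mul_ne_zero (by simpa using hβ) (pow_ne_zero _ (X_ne_zero 0)))

lemma pderiv2P {d : ℕ} {β : k} {f₀ : MvPolynomial (Fin 2) k}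
    {P : MvPolynomial (Fin 3) k}
    (hP : P = (X 1) ^ (d + 2) + X 0 * (aeval ![X 0, X 1] f₀)
      + C β * (X 0) ^ (d + 1) * X 2) :
    pderiv 2 P = C β * X 0 ^ (d + 1) := by
  subst hP
  simp [pderiv_mul, pderiv_pow, pderiv2_aeval,
    pderiv_X_of_ne (show (1:Fin 3) ≠ 2 by decide),
    pderiv_X_of_ne (show (0:Fin 3) ≠ 2 by decide), pderiv_C]
  exact pderiv2_aeval f₀

section withD
variable {d : ℕ} {γ β : k} {f₀ : MvPolynomial (Fin 2) k}
  {D : Derivation k (MvPolynomial (Fin 3) k) (MvPolynomial (Fin 3) k)}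
  {P : MvPolynomial (Fin 3) k}
  (hDdef : ∀ g, D g = C γ * jac (X 0) P g)
  (hP : P = (X 1) ^ (d + 2) + X 0 * (aeval ![X 0, X 1] f₀)
      + C β * (X 0) ^ (d + 1) * X 2)

include hDdef

lemma DC (c : k) : D (C c) = 0 := by
  rw [← algebraMap_eq]; exact D.map_algebraMap c

lemma DX0 : D (X 0) = 0 := by
  rw [Dform hDdef]
  simp [pderiv_X_of_ne (show (1:Fin 3) ≠ 0 by decide),
    pderiv_X_of_ne (show (2:Fin 3) ≠ 0 by decide)]

lemma DW : D (Wel γ β d) = 0 := by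
  unfold Wel
  rw [map_neg, D_mul', DC hDdef, D_mul', DC hDdef, Derivation.leibniz_pow, DX0 hDdef]
  simp

include hP

lemma Dp2 (g : MvPolynomial (Fin 3) k) (hg : pderiv 2 g = 0) :
    D g = Wel γ β d * pderiv 1 g := by
  rw [Dform hDdef, hg, mul_zero, pderiv2P hP, Wel]
  ring

lemma DX1 : D (X 1) = Wel γ β d := by
  rw [Dp2 hDdef hP (X 1) (pderiv_X_of_ne (by decide)), pderiv_X_self, mul_one]

end withD
end Specific2


section Specific3
variable {k : Type*} [Field k] [CharZero k]

lemma pd1_iter_X1pow (m n : ℕ) :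
    (⇑(pderiv 1 : Derivation k (MvPolynomial (Fin 3) k) (MvPolynomial (Fin 3) k)))^[m]
        ((X 1 : MvPolynomial (Fin 3) k) ^ n)
      = n.descFactorial m • X 1 ^ (n - m) := by
  induction m with
  | zero => simp
  | succ m ih =>
    rw [Function.iterate_succ_apply', ih, map_nsmul, pderiv_pow, pderiv_X_self, mul_one,
      Nat.descFactorial_succ, Nat.sub_sub, nsmul_eq_mul, nsmul_eq_mul]
    push_cast
    ring

lemma pd1_ker_CX0 (c : k) (p : ℕ) :
    pderiv 1 (C c * X 0 ^ p : MvPolynomial (Fin 3) k) = 0 := by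
  simp [pderiv_C_mul, pderiv_pow, pderiv_X_of_ne (show (0:Fin 3) ≠ 1 by decide)]

section withD2
variable {d : ℕ} {γ β : k} {f₀ : MvPolynomial (Fin 2) k}
  {D : Derivation k (MvPolynomial (Fin 3) k) (MvPolynomial (Fin 3) k)}
  {P : MvPolynomial (Fin 3) k}
  (hDdef : ∀ g, D g = C γ * jac (X 0) P g)
  (hP : P = (X 1) ^ (d + 2) + X 0 * (aeval ![X 0, X 1] f₀)
      + C β * (X 0) ^ (d + 1) * X 2)

include hP

lemma Qsucc (m : ℕ) :
    (⇑(pderiv 1 : Derivation k (MvPolynomial (Fin 3) k) (MvPolynomial (Fin 3) k)))^[m+1] P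
      = (d+2).descFactorial (m+1) • X 1 ^ (d+2-(m+1))
        + ∑ e ∈ f₀.support, C (coeff e f₀) * X 0 ^ (e 0 + 1)
            * ((e 1).descFactorial (m+1) • X 1 ^ (e 1 - (m+1))) := by
  subst hP
  rw [iterD_add (pderiv 1), iterD_add (pderiv 1), pd1_iter_X1pow, Fexp f₀, iterD_sum]
  have h3 : (⇑(pderiv 1 : Derivation k (MvPolynomial (Fin 3) k) (MvPolynomial (Fin 3) k)))^[m+1]
      (C β * X 0 ^ (d+1) * X 2) = 0 := by
    rw [Function.iterate_succ_apply]
    have : pderiv 1 (C β * X 0 ^ (d+1) * X 2 : MvPolynomial (Fin 3) k) = 0 := by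
      rw [pderiv_mul, pd1_ker_CX0, pderiv_X_of_ne (show (2:Fin 3) ≠ 1 by decide)]
      ring
    rw [this, iterD_zero]
  rw [h3, add_zero]
  congr 1
  refine Finset.sum_congr rfl fun e he => ?_
  rw [iterD_mul_ker (pderiv 1) _ (pd1_ker_CX0 _ _), pd1_iter_X1pow]

lemma pderiv2Q (m : ℕ) :
    pderiv 2 ((⇑(pderiv 1 : Derivation k (MvPolynomial (Fin 3) k)
      (MvPolynomial (Fin 3) k)))^[m+1] P) = 0 := by
  rw [Qsucc hP, map_add, map_nsmul, map_sum]
  simp [pderiv_mul, pderiv_pow, map_nsmul,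
    pderiv_X_of_ne (show (1:Fin 3) ≠ 2 by decide),
    pderiv_X_of_ne (show (0:Fin 3) ≠ 2 by decide)]

lemma Qd2 (hf : f₀.IsHomogeneous (d + 1)) :
    (⇑(pderiv 1 : Derivation k (MvPolynomial (Fin 3) k) (MvPolynomial (Fin 3) k)))^[d+2] P
      = (Nat.factorial (d+2)) • (1 : MvPolynomial (Fin 3) k) := by
  rw [show d+2 = (d+1)+1 from rfl, Qsucc hP, Nat.sub_self, pow_zero, Nat.descFactorial_self]
  rw [Finset.sum_eq_zero, add_zero]
  intro e he
  rw [Nat.descFactorial_eq_zero_iff_lt.mpr (by have := homog_e1 hf he; omega), zero_smul,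
    mul_zero]

lemma Qd3 (hf : f₀.IsHomogeneous (d + 1)) :
    (⇑(pderiv 1 : Derivation k (MvPolynomial (Fin 3) k) (MvPolynomial (Fin 3) k)))^[d+3] P
      = 0 := by
  rw [show d+3 = (d+2)+1 from rfl, Function.iterate_succ_apply', Qd2 hP hf, map_nsmul]
  simp [pderiv_one]

include hDdef

lemma DX2iter (m : ℕ) :
    (⇑D)^[m+1] (X 2)
      = C γ * ((⇑(pderiv 1 : Derivation k (MvPolynomial (Fin 3) k)
          (MvPolynomial (Fin 3) k)))^[m+1] P * (Wel γ β d)^m) := by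
  induction m with
  | zero =>
    rw [Function.iterate_one, Dform hDdef, Function.iterate_one, pow_zero, mul_one]
    simp [pderiv_X_self, pderiv_X_of_ne (show (2:Fin 3) ≠ 1 by decide)]
  | succ m ih =>
    have hQ : pderiv 1 ((⇑(pderiv 1 : Derivation k (MvPolynomial (Fin 3) k)
        (MvPolynomial (Fin 3) k)))^[m+1] P)
        = (⇑(pderiv 1 : Derivation k (MvPolynomial (Fin 3) k)
          (MvPolynomial (Fin 3) k)))^[m+1+1] P :=
      (Function.iterate_succ_apply' _ _ _).symm
    rw [Function.iterate_succ_apply', ih, D_mul', DC hDdef, D_mul',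
      Derivation.leibniz_pow, DW hDdef, Dp2 hDdef hP _ (pderiv2Q hP m), hQ]
    simp only [smul_zero, mul_zero, zero_mul, add_zero, zero_add]
    ring

lemma ndegX1 (hγ : γ ≠ 0) (hβ : β ≠ 0) : ndeg' D (X 1 : MvPolynomial (Fin 3) k) 1 := by
  constructor
  · rw [Function.iterate_one, DX1 hDdef hP]
    exact Wel_ne_zero hγ hβ d
  · rw [Function.iterate_succ_apply', Function.iterate_one, DX1 hDdef hP, DW hDdef]

lemma ndegX2 (hγ : γ ≠ 0) (hβ : β ≠ 0) (hf : f₀.IsHomogeneous (d + 1)) :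
    ndeg' D (X 2 : MvPolynomial (Fin 3) k) (d + 2) := by
  have h1 := DX2iter hDdef hP (d+1)
  rw [show d+1+1 = d+2 from rfl, Qd2 hP hf] at h1
  have h2 := DX2iter hDdef hP (d+2)
  rw [show d+2+1 = d+3 from rfl, Qd3 hP hf, zero_mul, mul_zero] at h2
  constructor
  · rw [h1]
    refine mul_ne_zero (by simpa using hγ) (mul_ne_zero ?_ (pow_ne_zero _ (Wel_ne_zero hγ hβ d)))
    rw [nsmul_eq_mul, mul_one]
    exact Nat.cast_ne_zero.mpr (Nat.factorial_ne_zero _)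
  · exact h2

lemma ndegMon (hγ : γ ≠ 0) (hβ : β ≠ 0) (hf : f₀.IsHomogeneous (d + 1)) (i j : ℕ) :
    ndeg' D ((X 1 : MvPolynomial (Fin 3) k) ^ i * (X 2) ^ j) (i + (d+2)*j) := by
  have h := ndeg'_mul D (ndeg'_pow D (ndegX1 hDdef hP hγ hβ) i)
    (ndeg'_pow D (ndegX2 hDdef hP hγ hβ hf) j)
  have he : i*1 + j*(d+2) = i + (d+2)*j := by ring
  rwa [he] at h

end withD2
end Specific3


lemma nu_inj (d : ℕ) {i j i' j' : ℕ} (hi : i ≤ d+1) (hi' : i' ≤ d+1)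
    (h : i + (d+2)*j = i' + (d+2)*j') : i = i' ∧ j = j' := by
  have h1 : (i + (d+2)*j) % (d+2) = i := by
    rw [Nat.add_mul_mod_self_left, Nat.mod_eq_of_lt (by omega)]
  have h2 : (i' + (d+2)*j') % (d+2) = i' := by
    rw [Nat.add_mul_mod_self_left, Nat.mod_eq_of_lt (by omega)]
  have hii : i = i' := by rw [← h1, h, h2]
  refine ⟨hii, ?_⟩
  have h3 : (d+2)*j = (d+2)*j' := by omega
  exact Nat.eq_of_mul_eq_mul_left (by omega) h3

/-- For the triangular normal form `D = γ Δ_{(X,P)}` with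
`P = Y^{d+2} + X f(X,Y) + β X^{d+1} Z`, `B = k[X,Y,Z]` is a free module over
`A = ker D` with `D`-basis `{Y^i Z^j : 0 ≤ i ≤ d+1, j ≥ 0}`: these elements
span `B` over `A`, are `A`-linearly independent, and have pairwise distinct
`deg_D`-values. -/
theorem free_basis_triangularizable {k : Type*} [Field k] [CharZero k]
    (d : ℕ) (γ β : k) (hγ : γ ≠ 0) (hβ : β ≠ 0)
    (f₀ : MvPolynomial (Fin 2) k) (hf : f₀.IsHomogeneous (d + 1))
    (D : Derivation k (MvPolynomial (Fin 3) k) (MvPolynomial (Fin 3) k))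
    (P : MvPolynomial (Fin 3) k)
    (hP : P = (X 1) ^ (d + 2) + X 0 * (aeval ![X 0, X 1] f₀)
      + C β * (X 0) ^ (d + 1) * X 2)
    (hDdef : ∀ g, D g = C γ * jac (X 0) P g)
    (hlnd : IsLND D) (hirr : IsIrred D)
    (hker : {b | D b = 0}
      = ↑(Algebra.adjoin k ({X 0, P} : Set (MvPolynomial (Fin 3) k)))) :
    (∀ g : MvPolynomial (Fin 3) k,
      ∃ (s : Finset (ℕ × ℕ)) (a : ℕ × ℕ → MvPolynomial (Fin 3) k),
        (∀ pr ∈ s, D (a pr) = 0 ∧ pr.1 ≤ d + 1) ∧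
        g = ∑ pr ∈ s, a pr * (X 1) ^ pr.1 * (X 2) ^ pr.2) ∧
    (∀ (s : Finset (ℕ × ℕ)) (a : ℕ × ℕ → MvPolynomial (Fin 3) k),
      (∀ pr ∈ s, pr.1 ≤ d + 1) → (∀ pr ∈ s, D (a pr) = 0) →
      ∑ pr ∈ s, a pr * (X 1) ^ pr.1 * (X 2) ^ pr.2 = 0 →
      ∀ pr ∈ s, a pr = 0) ∧
    (∀ i j i' j' : ℕ, i ≤ d + 1 → i' ≤ d + 1 → (i, j) ≠ (i', j') →
      ∀ mdeg : ℕ, ndeg D ((X 1) ^ i * (X 2) ^ j) mdeg →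
        ¬ ndeg D ((X 1) ^ i' * (X 2) ^ j') mdeg) := by
  classical
  have hkerD : ∀ b : MvPolynomial (Fin 3) k,
      b ∈ Algebra.adjoin k ({X 0, P} : Set (MvPolynomial (Fin 3) k)) → D b = 0 :=
    fun b hb => (Set.ext_iff.mp hker b).mpr hb
  have hconv : ∀ (b : MvPolynomial (Fin 3) k) (n : ℕ), ndeg D b n → ndeg' D b n :=
    fun b n h => h
  refine ⟨?_, ?_, ?_⟩
  · -- spanning
    set A' : Subalgebra k (MvPolynomial (Fin 3) k) := Algebra.adjoin k {X 0, P} with hA'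
    set v : ℕ × ℕ → MvPolynomial (Fin 3) k :=
      fun pr => (X 1 : MvPolynomial (Fin 3) k) ^ pr.1 * X 2 ^ pr.2 with hv
    set Sp : Submodule A' (MvPolynomial (Fin 3) k) :=
      Submodule.span A' (v '' {pr | pr.1 ≤ d + 1}) with hSp
    have hsm : ∀ (c : A') (x : MvPolynomial (Fin 3) k), c • x = (c : MvPolynomial (Fin 3) k) * x :=
      fun c x => by rw [Algebra.smul_def]; rfl
    have hgen : ∀ pr : ℕ × ℕ, pr.1 ≤ d + 1 → v pr ∈ Sp :=
      fun pr h => Submodule.subset_span ⟨pr, h, rfl⟩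
    have hsmul : ∀ (c : MvPolynomial (Fin 3) k), c ∈ A' →
        ∀ x ∈ Sp, c * x ∈ Sp := by
      intro c hc x hx
      have := Submodule.smul_mem Sp (⟨c, hc⟩ : A') hx
      rwa [hsm] at this
    have hX0 : (X 0 : MvPolynomial (Fin 3) k) ∈ A' := Algebra.subset_adjoin (by simp)
    have hPA : P ∈ A' := Algebra.subset_adjoin (by simp)
    have hspan : ∀ g : MvPolynomial (Fin 3) k, g ∈ Sp := by
      intro g
      induction g using MvPolynomial.induction_on with
      | C a =>
        have hCa : (C a : MvPolynomial (Fin 3) k) ∈ A' := by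
          rw [← algebraMap_eq]; exact A'.algebraMap_mem a
        have h1 : (C a : MvPolynomial (Fin 3) k) = C a * v (0, 0) := by
          simp [hv]
        rw [h1]
        exact hsmul _ hCa _ (hgen (0, 0) (by omega))
      | add p q hp hq => exact Submodule.add_mem _ hp hq
      | mul_X p i hp =>
        refine Submodule.span_induction ?_ ?_ ?_ ?_ hp
        · rintro x ⟨pr, hpr, rfl⟩
          fin_cases i
          · show v pr * (X 0 : MvPolynomial (Fin 3) k) ∈ Sp
            rw [mul_comm]
            exact hsmul _ hX0 _ (hgen pr hpr)
          · show v pr * (X 1 : MvPolynomial (Fin 3) k) ∈ Sp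
            by_cases ha : pr.1 = d + 1
            · have key : v pr * X 1
                  = P * v (0, pr.2)
                    - ∑ e ∈ f₀.support, (C (coeff e f₀) * X 0 ^ (e 0 + 1)) * v (e 1, pr.2)
                    - (C β * X 0 ^ (d+1)) * v (0, pr.2 + 1) := by
                simp only [hv, ha]
                have hY : (X 1 : MvPolynomial (Fin 3) k)^(d+2)
                    = P - X 0 * aeval ![X 0, X 1] f₀ - C β * X 0^(d+1) * X 2 := by
                  rw [hP]; ring
                have : (X 1 : MvPolynomial (Fin 3) k)^(d+1) * X 2 ^ pr.2 * X 1
                    = (X 1)^(d+2) * X 2 ^ pr.2 := by ring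
                rw [this, hY, sub_mul, sub_mul, Fexp f₀, Finset.sum_mul]
                congr 1
                · congr 1
                  · ring
                  · refine Finset.sum_congr rfl fun e he => ?_
                    ring
                · ring
              rw [key]
              refine Submodule.sub_mem _ (Submodule.sub_mem _ ?_ ?_) ?_
              · exact hsmul _ hPA _ (hgen (0, pr.2) (by omega))
              · refine Submodule.sum_mem _ fun e he => ?_
                refine hsmul _ ?_ _ (hgen (e 1, pr.2) (homog_e1 hf he))
                refine mul_mem ?_ (pow_mem hX0 _)
                rw [← algebraMap_eq]; exact A'.algebraMap_mem _
              · refine hsmul _ ?_ _ (hgen (0, pr.2 + 1) (by omega))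
                refine mul_mem ?_ (pow_mem hX0 _)
                rw [← algebraMap_eq]; exact A'.algebraMap_mem _
            · have key : v pr * X 1 = v (pr.1 + 1, pr.2) := by
                simp only [hv]; ring
              rw [key]
              exact hgen (pr.1 + 1, pr.2) (by simp at hpr ⊢; omega)
          · show v pr * (X 2 : MvPolynomial (Fin 3) k) ∈ Sp
            have key : v pr * X 2 = v (pr.1, pr.2 + 1) := by
              simp only [hv]; ring
            rw [key]
            exact hgen (pr.1, pr.2 + 1) hpr
        · simpa using Submodule.zero_mem Sp
        · intro x y hx hy hx' hy'
          rw [add_mul]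
          exact Submodule.add_mem _ hx' hy'
        · intro c x hx hx'
          rw [hsm, mul_assoc, ← hsm]
          exact Submodule.smul_mem _ _ hx'
    intro g
    obtain ⟨l, hl, hlc⟩ := (Finsupp.mem_span_image_iff_linearCombination A').mp (hspan g)
    refine ⟨l.support, fun pr => ((l pr : A') : MvPolynomial (Fin 3) k), ?_, ?_⟩
    · intro pr hpr
      exact ⟨hkerD _ (l pr).2, (Finsupp.mem_supported A' l).mp hl hpr⟩
    · rw [← hlc, Finsupp.linearCombination_apply, Finsupp.sum]
      refine Finset.sum_congr rfl fun pr hpr => ?_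
      rw [hsm, hv, mul_assoc]
  · -- independence
    intro s a hi hD hsum
    by_contra hcon
    push_neg at hcon
    obtain ⟨pr₀, hpr₀s, hpr₀⟩ := hcon
    set t := s.filter (fun pr => a pr ≠ 0) with ht
    have htne : t.Nonempty := ⟨pr₀, Finset.mem_filter.mpr ⟨hpr₀s, hpr₀⟩⟩
    obtain ⟨pm, hpmt, hpmax⟩ := Finset.exists_max_image t (fun pr => pr.1 + (d+2)*pr.2) htne
    have hpm_s := (Finset.mem_filter.mp hpmt).1
    have hpm_ne := (Finset.mem_filter.mp hpmt).2
    set N := pm.1 + (d+2)*pm.2 with hN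
    have happ : (⇑D)^[N] (∑ pr ∈ s, a pr * X 1 ^ pr.1 * X 2 ^ pr.2)
        = ∑ pr ∈ s, a pr * (⇑D)^[N] (X 1 ^ pr.1 * X 2 ^ pr.2) := by
      rw [iterD_sum]
      refine Finset.sum_congr rfl fun pr hpr => ?_
      rw [mul_assoc, iterD_mul_ker D _ (hD pr hpr)]
    rw [hsum, iterD_zero] at happ
    have hred : ∑ pr ∈ s, a pr * (⇑D)^[N] (X 1 ^ pr.1 * X 2 ^ pr.2)
        = a pm * (⇑D)^[N] (X 1 ^ pm.1 * X 2 ^ pm.2) := by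
      rw [Finset.sum_eq_single pm]
      · intro pr hpr hne
        by_cases hz : a pr = 0
        · rw [hz, zero_mul]
        · have hprt : pr ∈ t := Finset.mem_filter.mpr ⟨hpr, hz⟩
          have hle := hpmax pr hprt
          have hnu : pr.1 + (d+2)*pr.2 ≠ N := by
            intro he
            obtain ⟨he1, he2⟩ := nu_inj d (hi pr hpr) (hi pm hpm_s) (he.trans hN)
            exact hne (Prod.ext he1 he2)
          have hz2 : (⇑D)^[N] (X 1 ^ pr.1 * X 2 ^ pr.2) = 0 :=
            iterD_eq_zero_of_ge D (ndegMon hDdef hP hγ hβ hf pr.1 pr.2).2 (by omega)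
          rw [hz2, mul_zero]
      · intro h; exact absurd hpm_s h
    rw [hred] at happ
    rcases mul_eq_zero.mp happ.symm with h | h
    · exact hpm_ne h
    · exact (ndegMon hDdef hP hγ hβ hf pm.1 pm.2).1 h
  · -- distinct degrees
    intro i j i' j' hi hi' hne mdeg h1 h2
    have hm1 := ndeg'_unique D (hconv _ _ h1) (ndegMon hDdef hP hγ hβ hf i j)
    have hm2 := ndeg'_unique D (hconv _ _ h2) (ndegMon hDdef hP hγ hβ hf i' j')
    obtain ⟨he1, he2⟩ := nu_inj d hi hi' (hm1 ▸ hm2 ▸ rfl : i + (d+2)*j = i' + (d+2)*j')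
    exact hne (by rw [he1, he2])
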